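/- arXiv:2503.23818 — 3 statements merged into one kernel-verified Lean document; each statement's English description precedes it below -/
import Mathlib

section
/- Let n, m, p ≥ 1, let A ∈ ℝ^{n×n}, B ∈ ℝ^{n×m}, C ∈ ℝ^{p×n}, D ∈ ℝ^{p×m}, let γ > 0, and let P ∈ ℝ^{n×n} be symmetric positive definite. Assume the bounded-real LMI holds, i.e. the symmetric block matrix [[AᵀPA − P + CᵀC, AᵀPB + CᵀD],[BᵀPA + DᵀC, BᵀPB + DᵀD − γ²I]] is negative definite. Then for every input sequence u : ℕ → ℝ^m, the trajectory of the DT-LTI system satisfies, for every horizon T ∈ ℕ: ∑_{k=0}^{T−1} ‖z_k‖² + h_Tᵀ P h_T ≤ γ² ∑_{k=0}^{T−1} ‖u_k‖². -/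
open Matrix

/-- Squared Euclidean norm of a vector in `ℝ^d`. -/
def sqNorm {d : ℕ} (v : Fin d → ℝ) : ℝ := ∑ i, v i ^ 2

/-- State trajectory of the DT-LTI system `h_{k+1} = A h_k + B u_k`, `h_0 = 0`. -/
noncomputable def ltiState {n m : ℕ} (A : Matrix (Fin n) (Fin n) ℝ)
    (B : Matrix (Fin n) (Fin m) ℝ) (u : ℕ → Fin m → ℝ) : ℕ → Fin n → ℝ
  | 0 => 0
  | k + 1 => A.mulVec (ltiState A B u k) + B.mulVec (u k)

/-- Output trajectory `z_k = C h_k + D u_k` of the DT-LTI system. -/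
noncomputable def ltiOutput {n m p : ℕ} (A : Matrix (Fin n) (Fin n) ℝ)
    (B : Matrix (Fin n) (Fin m) ℝ) (C : Matrix (Fin p) (Fin n) ℝ)
    (D : Matrix (Fin p) (Fin m) ℝ) (u : ℕ → Fin m → ℝ) (k : ℕ) : Fin p → ℝ :=
  C.mulVec (ltiState A B u k) + D.mulVec (u k)

/-!
The quadratic storage function `V h = hᵀ P h` decreases along the system up to the supply rate:
evaluating the bounded-real quadratic form at `(h_k, u_k)` gives exactly
`‖z_k‖² + V h_{k+1} - V h_k - γ² ‖u_k‖²`, which the LMI makes nonpositive. Summing these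
one-step dissipation inequalities telescopes, and `V h_0 = 0`.
-/

lemma sqNorm_eq_dotProduct {d : ℕ} (v : Fin d → ℝ) : sqNorm v = v ⬝ᵥ v := by
  simp [sqNorm, dotProduct, sq]

lemma sum_add_le_sum_of_dissipation {V w s : ℕ → ℝ} (hV₀ : V 0 = 0)
    (hstep : ∀ k, V (k + 1) + w k ≤ V k + s k) (T : ℕ) :
    ∑ k ∈ Finset.range T, w k + V T ≤ ∑ k ∈ Finset.range T, s k := by
  induction T with
  | zero => simp [hV₀]
  | succ T ih =>
    rw [Finset.sum_range_succ, Finset.sum_range_succ]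
    linarith [hstep T]

section BoundedReal

variable {ι κ π : Type*} [Fintype ι] [Fintype κ] [Fintype π] [DecidableEq κ]
  (A : Matrix ι ι ℝ) (B : Matrix ι κ ℝ) (C : Matrix π ι ℝ) (D : Matrix π κ ℝ)
  (γ : ℝ) (P : Matrix ι ι ℝ)

abbrev boundedRealMatrix : Matrix (ι ⊕ κ) (ι ⊕ κ) ℝ :=
  fromBlocks (Aᵀ * P * A - P + Cᵀ * C) (Aᵀ * P * B + Cᵀ * D)
    (Bᵀ * P * A + Dᵀ * C) (Bᵀ * P * B + Dᵀ * D - γ ^ 2 • 1)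

lemma sumElim_dotProduct_boundedRealMatrix_mulVec (h : ι → ℝ) (u : κ → ℝ) :
    Sum.elim h u ⬝ᵥ boundedRealMatrix A B C D γ P *ᵥ Sum.elim h u
      = (C *ᵥ h + D *ᵥ u) ⬝ᵥ (C *ᵥ h + D *ᵥ u)
        + (A *ᵥ h + B *ᵥ u) ⬝ᵥ P *ᵥ (A *ᵥ h + B *ᵥ u)
        - h ⬝ᵥ P *ᵥ h - γ ^ 2 * (u ⬝ᵥ u) := by
  simp only [boundedRealMatrix, fromBlocks_mulVec, sumElim_dotProduct_sumElim, mulVec_add,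
    add_mulVec, sub_mulVec, smul_mulVec, one_mulVec, dotProduct_add, add_dotProduct,
    dotProduct_sub, dotProduct_smul, smul_eq_mul, dotProduct_mulVec, ← vecMul_vecMul,
    vecMul_transpose, add_vecMul, Sum.elim_comp_inl, Sum.elim_comp_inr]
  ring

variable {A B C D γ P}

lemma dissipation_step_of_boundedReal (hLMI : (-boundedRealMatrix A B C D γ P).PosSemidef)
    (h : ι → ℝ) (u : κ → ℝ) :
    (A *ᵥ h + B *ᵥ u) ⬝ᵥ P *ᵥ (A *ᵥ h + B *ᵥ u) + (C *ᵥ h + D *ᵥ u) ⬝ᵥ (C *ᵥ h + D *ᵥ u)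
      ≤ h ⬝ᵥ P *ᵥ h + γ ^ 2 * (u ⬝ᵥ u) := by
  have hneg := hLMI.dotProduct_mulVec_nonneg (Sum.elim h u)
  rw [star_trivial, neg_mulVec, dotProduct_neg, sumElim_dotProduct_boundedRealMatrix_mulVec] at hneg
  linarith

end BoundedReal

theorem stmt0_general {n m p : ℕ}
    (A : Matrix (Fin n) (Fin n) ℝ) (B : Matrix (Fin n) (Fin m) ℝ)
    (C : Matrix (Fin p) (Fin n) ℝ) (D : Matrix (Fin p) (Fin m) ℝ)
    (γ : ℝ) (P : Matrix (Fin n) (Fin n) ℝ)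
    (hLMI : (-(Matrix.fromBlocks
        (Aᵀ * P * A - P + Cᵀ * C) (Aᵀ * P * B + Cᵀ * D)
        (Bᵀ * P * A + Dᵀ * C) (Bᵀ * P * B + Dᵀ * D - γ ^ 2 • 1))).PosDef)
    (u : ℕ → Fin m → ℝ) (T : ℕ) :
    ∑ k ∈ Finset.range T, sqNorm (ltiOutput A B C D u k)
        + ltiState A B u T ⬝ᵥ P.mulVec (ltiState A B u T)
      ≤ γ ^ 2 * ∑ k ∈ Finset.range T, sqNorm (u k) := by
  rw [Finset.mul_sum]
  refine sum_add_le_sum_of_dissipation (V := fun k ↦ ltiState A B u k ⬝ᵥ P *ᵥ ltiState A B u k)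
    (by simp [ltiState]) (fun k ↦ ?_) T
  simpa only [ltiState, ltiOutput, sqNorm_eq_dotProduct] using
    dissipation_step_of_boundedReal hLMI.posSemidef (ltiState A B u k) (u k)

theorem stmt0 {n m p : ℕ} (hn : 1 ≤ n) (hm : 1 ≤ m) (hp : 1 ≤ p)
    (A : Matrix (Fin n) (Fin n) ℝ) (B : Matrix (Fin n) (Fin m) ℝ)
    (C : Matrix (Fin p) (Fin n) ℝ) (D : Matrix (Fin p) (Fin m) ℝ)
    (γ : ℝ) (hγ : 0 < γ) (P : Matrix (Fin n) (Fin n) ℝ) (hP : P.PosDef)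
    (hLMI : (-(Matrix.fromBlocks
        (Aᵀ * P * A - P + Cᵀ * C) (Aᵀ * P * B + Cᵀ * D)
        (Bᵀ * P * A + Dᵀ * C) (Bᵀ * P * B + Dᵀ * D - γ ^ 2 • 1))).PosDef)
    (u : ℕ → Fin m → ℝ) (T : ℕ) :
    ∑ k ∈ Finset.range T, sqNorm (ltiOutput A B C D u k)
        + ltiState A B u T ⬝ᵥ P.mulVec (ltiState A B u T)
      ≤ γ ^ 2 * ∑ k ∈ Finset.range T, sqNorm (u k) :=
  stmt0_general A B C D γ P hLMI u T
end

section
/- Let P ∈ ℝ^{n×n} be symmetric positive definite and let A ∈ ℝ^{n×n} be such that P − AᵀPA is positive definite (discrete-time Lyapunov inequality). Then A is Schur stable: every complex eigenvalue λ of A (viewed as a complex matrix) satisfies |λ| < 1. -/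
/-! If `M v = μ v` with `v ≠ 0`, then `v* (P - Mᴴ P M) v = (1 - |μ|²) v* P v`; both quadratic
forms are positive, so `|μ| < 1`. A real positive definite matrix stays positive definite over `ℂ`,
since `(a + ib)* Q (a + ib)` has real part `aᵀQa + bᵀQb`, which reduces the real statement to the
complex one. -/

open Matrix ComplexOrder

namespace Matrix

variable {n : Type*} [Fintype n]

lemma IsHermitian.isSelfAdjoint_star_dotProduct_mulVec {R : Type*} [CommSemiring R] [StarRing R]
    {M : Matrix n n R} (hM : M.IsHermitian) (x : n → R) :
    IsSelfAdjoint (star x ⬝ᵥ M *ᵥ x) := by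
  rw [IsSelfAdjoint, ← star_dotProduct, star_mulVec, ← dotProduct_mulVec, hM.eq]

lemma re_star_dotProduct_map_ofReal_mulVec (Q : Matrix n n ℝ) (x : n → ℂ) :
    (star x ⬝ᵥ Q.map Complex.ofReal *ᵥ x).re =
      (fun i ↦ (x i).re) ⬝ᵥ Q *ᵥ (fun i ↦ (x i).re) +
        (fun i ↦ (x i).im) ⬝ᵥ Q *ᵥ (fun i ↦ (x i).im) := by
  simp only [dotProduct, mulVec, Complex.re_sum, Finset.mul_sum, ← Finset.sum_add_distrib]
  refine Finset.sum_congr rfl fun i _ ↦ Finset.sum_congr rfl fun j _ ↦ ?_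
  simp [Complex.mul_re, Complex.mul_im]

lemma PosDef.map_ofReal {Q : Matrix n n ℝ} (hQ : Q.PosDef) : (Q.map Complex.ofReal).PosDef := by
  have hherm : (Q.map Complex.ofReal).IsHermitian :=
    hQ.isHermitian.map _ fun _ ↦ (Complex.conj_ofReal _).symm
  refine .of_dotProduct_mulVec_pos hherm fun x hx ↦ Complex.pos_iff.2 ⟨?_, ?_⟩
  · rw [re_star_dotProduct_map_ofReal_mulVec]
    have hreim : (fun i ↦ (x i).re) ≠ 0 ∨ (fun i ↦ (x i).im) ≠ 0 := by
      by_contra! h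
      exact hx (funext fun i ↦ Complex.ext (congrFun h.1 i) (congrFun h.2 i))
    rcases hreim with h | h
    · exact add_pos_of_pos_of_nonneg (by simpa using hQ.dotProduct_mulVec_pos h)
        (by simpa using hQ.posSemidef.dotProduct_mulVec_nonneg _)
    · exact add_pos_of_nonneg_of_pos (by simpa using hQ.posSemidef.dotProduct_mulVec_nonneg _)
        (by simpa using hQ.dotProduct_mulVec_pos h)
  · exact (Complex.conj_eq_iff_im.1 (hherm.isSelfAdjoint_star_dotProduct_mulVec x)).symm

lemma norm_lt_one_of_mem_spectrum_of_lyapunov {𝕜 : Type*} [RCLike 𝕜] [DecidableEq n]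
    {P M : Matrix n n 𝕜} (hP : P.PosDef) (hM : (P - Mᴴ * P * M).PosDef) {μ : 𝕜}
    (hμ : μ ∈ spectrum 𝕜 M) : ‖μ‖ < 1 := by
  rw [← spectrum_toLin', ← Module.End.hasEigenvalue_iff_mem_spectrum] at hμ
  obtain ⟨v, hv⟩ := hμ.exists_hasEigenvector
  have hMv : M *ᵥ v = μ • v := hv.apply_eq_smul
  have hquad : star v ⬝ᵥ (P - Mᴴ * P * M) *ᵥ v =
      ((1 - ‖μ‖ ^ 2 : ℝ) : 𝕜) * (star v ⬝ᵥ P *ᵥ v) := by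
    have hMPM : star v ⬝ᵥ (Mᴴ * P * M) *ᵥ v = star (M *ᵥ v) ⬝ᵥ P *ᵥ (M *ᵥ v) := by
      rw [star_mulVec, ← dotProduct_mulVec, mulVec_mulVec, mulVec_mulVec]
    rw [sub_mulVec, dotProduct_sub, hMPM, hMv, star_smul, mulVec_smul, smul_dotProduct,
      dotProduct_smul, smul_smul, smul_eq_mul, RCLike.star_def, RCLike.conj_mul]
    push_cast
    ring
  have hPv := (RCLike.pos_iff.1 (hP.dotProduct_mulVec_pos hv.2)).1
  have hLv := (RCLike.pos_iff.1 (hM.dotProduct_mulVec_pos hv.2)).1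
  rw [hquad, RCLike.re_ofReal_mul] at hLv
  have hgap : 0 < 1 - ‖μ‖ ^ 2 := (mul_pos_iff_of_pos_right hPv).1 hLv
  exact (sq_lt_one_iff₀ (norm_nonneg μ)).1 (by linarith)

end Matrix

theorem stmt7 {n : ℕ} (P A : Matrix (Fin n) (Fin n) ℝ) (hP : P.PosDef)
    (hLyap : (P - Aᵀ * P * A).PosDef) :
    ∀ lam ∈ spectrum ℂ (A.map (Complex.ofReal : ℝ → ℂ)), ‖lam‖ < 1 := by
  intro lam hlam
  have hmap : (P - Aᵀ * P * A).map Complex.ofReal =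
      P.map Complex.ofReal -
        (A.map Complex.ofReal)ᴴ * P.map Complex.ofReal * A.map Complex.ofReal := by
    ext i j
    simp [mul_apply]
  exact norm_lt_one_of_mem_spectrum_of_lyapunov hP.map_ofReal (hmap ▸ hLyap.map_ofReal) hlam
end

section
/- Let R, H ∈ ℝ^{n×n} and suppose L₁, L₂ ∈ ℝ^{n×n} are invertible matrices with L₁L₁ᵀ = H − R and L₂L₂ᵀ = −R (so that both −R and −(R − H) are symmetric positive definite). Then a matrix Ã ∈ ℝ^{n×n} satisfies Ã R Ãᵀ = R − H if and only if there exists an orthogonal matrix Q ∈ ℝ^{n×n} (Q Qᵀ = I) such that Ã = L₁ Q L₂⁻¹. -/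
open Matrix

theorem stmt10 {n : ℕ} (R H : Matrix (Fin n) (Fin n) ℝ)
    (L1 L2 : Matrix (Fin n) (Fin n) ℝ) (hL1 : IsUnit L1) (hL2 : IsUnit L2)
    (hL1e : L1 * L1ᵀ = H - R) (hL2e : L2 * L2ᵀ = -R)
    (Atil : Matrix (Fin n) (Fin n) ℝ) :
    Atil * R * Atilᵀ = R - H ↔
      ∃ Q : Matrix (Fin n) (Fin n) ℝ, Q * Qᵀ = 1 ∧ Atil = L1 * Q * L2⁻¹ := by
  have hd1 : IsUnit L1.det := (Matrix.isUnit_iff_isUnit_det L1).mp hL1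
  have hd2 : IsUnit L2.det := (Matrix.isUnit_iff_isUnit_det L2).mp hL2
  have h1i : L1⁻¹ * L1 = 1 := Matrix.nonsing_inv_mul L1 hd1
  have h1i' : L1 * L1⁻¹ = 1 := Matrix.mul_nonsing_inv L1 hd1
  have h2i : L2⁻¹ * L2 = 1 := Matrix.nonsing_inv_mul L2 hd2
  have h2i' : L2 * L2⁻¹ = 1 := Matrix.mul_nonsing_inv L2 hd2
  have hR : R = -(L2 * L2ᵀ) := by rw [hL2e, neg_neg]
  constructor
  · intro h
    refine ⟨L1⁻¹ * Atil * L2, ?_, ?_⟩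
    · have : (L1⁻¹ * Atil * L2) * (L1⁻¹ * Atil * L2)ᵀ
          = L1⁻¹ * (Atil * (L2 * L2ᵀ) * Atilᵀ) * (L1⁻¹)ᵀ := by
        simp only [Matrix.transpose_mul]
        noncomm_ring
      rw [this, hL2e]
      rw [show Atil * -R * Atilᵀ = -(Atil * R * Atilᵀ) by noncomm_ring, h,
        neg_sub, ← hL1e,
        Matrix.transpose_nonsing_inv]
      calc L1⁻¹ * (L1 * L1ᵀ) * (L1ᵀ)⁻¹
          = (L1⁻¹ * L1) * (L1ᵀ * (L1ᵀ)⁻¹) := by noncomm_ring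
        _ = 1 := by
            rw [h1i, Matrix.mul_nonsing_inv _ (by simpa using hd1)]
            simp
    · rw [show L1 * (L1⁻¹ * Atil * L2) * L2⁻¹
          = (L1 * L1⁻¹) * Atil * (L2 * L2⁻¹) by noncomm_ring, h1i', h2i']
      simp
  · rintro ⟨Q, hQ, rfl⟩
    rw [hR]
    have ht : (L2⁻¹)ᵀ = (L2ᵀ)⁻¹ := Matrix.transpose_nonsing_inv L2
    simp only [Matrix.transpose_mul, ht]
    rw [show L1 * Q * L2⁻¹ * -(L2 * L2ᵀ) * ((L2ᵀ)⁻¹ * (Qᵀ * L1ᵀ))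
        = -(L1 * Q * ((L2⁻¹ * L2) * (L2ᵀ * (L2ᵀ)⁻¹)) * Qᵀ * L1ᵀ) by noncomm_ring,
      h2i, Matrix.mul_nonsing_inv _ (by simpa using hd2)]
    rw [show -(L1 * Q * (1 * 1) * Qᵀ * L1ᵀ) = -(L1 * (Q * Qᵀ) * L1ᵀ) by noncomm_ring,
      hQ]
    rw [show -(L1 * 1 * L1ᵀ) = -(L1 * L1ᵀ) by noncomm_ring, hL1e, hL2e]
    abel
end
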